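/- Let μ be a centred probability measure on ℝ with distribution function F, b < 0 < b̄, and suppose ξ ∈ (F(b), F(b̄−)) and π* ∈ [F(b̄−),1) satisfy m̃_ξ^{F(b̄−)} + b̄(1−F(b̄−)+ξ) = 0 and m̃^ξ + m̃_{F(b̄−)}^{π*} = b(ξ + π* − F(b̄−)). Define ν = ((π*−F(b̄−)+ξ)δ_b + μ_{π*})/(1−F(b̄−)+ξ). Then ν has barycentre b̄. -/

import Mathlib

/-!
The quantile function of `μ`, viewed as a random variable on `(0,1)` with Lebesgue measure, has
law `μ`; hence `m̃_0^1` is the mean of `μ`, which vanishes. Splitting `(0,1]` at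
`ξ ≤ F(b̄-) ≤ π*` and subtracting the two defining equations leaves
`(π* - F(b̄-) + ξ) b + m̃_{π*} = b̄ (1 - F(b̄-) + ξ)`, which is the barycentre identity for `ν`.
-/

open MeasureTheory Set

/-- Distribution function of `μ`. -/
noncomputable def distF (μ : Measure ℝ) (x : ℝ) : ℝ := (μ (Iic x)).toReal

/-- Left limit `F(x-)` of the distribution function. -/
noncomputable def distFm (μ : Measure ℝ) (x : ℝ) : ℝ := (μ (Iio x)).toReal

/-- Quantile function of `μ`. -/
noncomputable def quantile (μ : Measure ℝ) (u : ℝ) : ℝ :=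
  sInf {x : ℝ | u ≤ distF μ x}

/-- The sub-probability measure `μ_p^q`, i.e. `μ` restricted to its quantile range `(p,q]`,
realised as the image under the quantile function of Lebesgue measure on `(p,q]`. -/
noncomputable def qmeas (μ : Measure ℝ) (p q : ℝ) : Measure ℝ :=
  (volume.restrict (Ioc p q)).map (quantile μ)

/-- `m̃_p^q = ∫ x dμ_p^q`. -/
noncomputable def mtil (μ : Measure ℝ) (p q : ℝ) : ℝ :=
  ∫ u in Ioc p q, quantile μ u

/-- The barycentre `m_p^q` of `μ` restricted to the quantile range `(p,q]`. -/
noncomputable def bary (μ : Measure ℝ) (p q : ℝ) : ℝ :=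
  if p < q then (q - p)⁻¹ * mtil μ p q else quantile μ q

open Filter ProbabilityTheory

section Quantile

variable {μ : Measure ℝ}

lemma nonempty_setOf_le_cdf {u : ℝ} (hu : u < 1) : {x | u ≤ cdf μ x}.Nonempty :=
  ((tendsto_cdf_atTop μ).eventually (eventually_ge_nhds hu)).exists

lemma bddBelow_setOf_le_cdf {u : ℝ} (hu : 0 < u) : BddBelow {x | u ≤ cdf μ x} := by
  obtain ⟨y, hy⟩ := ((tendsto_cdf_atBot μ).eventually (eventually_lt_nhds hu)).exists
  refine ⟨y, fun z hz => le_of_not_gt fun hzy => ?_⟩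
  exact (hz.trans (monotone_cdf μ hzy.le)).not_gt hy

variable [IsProbabilityMeasure μ]

lemma quantile_eq_sInf_cdf (u : ℝ) : quantile μ u = sInf {x | u ≤ cdf μ x} := by
  simp only [quantile, distF, cdf_eq_real, measureReal_def]

lemma le_cdf_quantile {u : ℝ} (hu0 : 0 < u) (hu1 : u < 1) : u ≤ cdf μ (quantile μ u) := by
  rw [quantile_eq_sInf_cdf]
  have h_above : ∀ x ∈ Ioi (sInf {x | u ≤ cdf μ x}), u ≤ cdf μ x := fun x hx => by
    obtain ⟨z, hz, hzx⟩ :=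
      (csInf_lt_iff (bddBelow_setOf_le_cdf hu0) (nonempty_setOf_le_cdf hu1)).1 hx
    exact hz.trans (monotone_cdf μ hzx.le)
  exact ge_of_tendsto (((cdf μ).right_continuous _).mono Ioi_subset_Ici_self).tendsto
    (eventually_nhdsWithin_of_forall h_above)

lemma quantile_le_iff_le_cdf {u x : ℝ} (hu0 : 0 < u) (hu1 : u < 1) :
    quantile μ u ≤ x ↔ u ≤ cdf μ x :=
  ⟨fun h => (le_cdf_quantile hu0 hu1).trans (monotone_cdf μ h), fun h => by
    rw [quantile_eq_sInf_cdf]; exact csInf_le (bddBelow_setOf_le_cdf hu0) h⟩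

lemma monotoneOn_quantile : MonotoneOn (quantile μ) (Ioo 0 1) := fun u hu v hv huv => by
  rw [quantile_eq_sInf_cdf, quantile_eq_sInf_cdf]
  exact csInf_le_csInf (bddBelow_setOf_le_cdf hu.1) (nonempty_setOf_le_cdf hv.2)
    fun x hx => huv.trans hx

lemma aemeasurable_quantile : AEMeasurable (quantile μ) (volume.restrict (Ioo 0 1)) :=
  aemeasurable_restrict_of_monotoneOn measurableSet_Ioo monotoneOn_quantile

lemma preimage_quantile_Iic_inter_Ioo (x : ℝ) :
    quantile μ ⁻¹' Iic x ∩ Ioo 0 1 = Ioo 0 1 ∩ Ioc 0 (cdf μ x) := by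
  ext u
  simp only [mem_inter_iff, mem_preimage, mem_Iic, mem_Ioo, mem_Ioc]
  exact ⟨fun ⟨h, hu⟩ => ⟨hu, hu.1, (quantile_le_iff_le_cdf hu.1 hu.2).1 h⟩,
    fun ⟨hu, _, h⟩ => ⟨(quantile_le_iff_le_cdf hu.1 hu.2).2 h, hu⟩⟩

theorem map_quantile_volume_Ioo : (volume.restrict (Ioo 0 1)).map (quantile μ) = μ := by
  have : IsProbabilityMeasure (volume.restrict (Ioo (0 : ℝ) 1)) := ⟨by simp⟩
  have := Measure.isProbabilityMeasure_map (μ := volume.restrict (Ioo (0 : ℝ) 1))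
    (aemeasurable_quantile (μ := μ))
  refine Measure.ext_of_Iic _ _ fun x => ?_
  rw [Measure.map_apply_of_aemeasurable aemeasurable_quantile measurableSet_Iic,
    Measure.restrict_apply' measurableSet_Ioo, preimage_quantile_Iic_inter_Ioo,
    ← ofReal_cdf μ x]
  rcases lt_or_ge (cdf μ x) 1 with hx | hx
  · rw [Ioo_inter_Ioc_of_right_lt hx, max_self, Real.volume_Ioc, sub_zero]
  · rw [Ioo_inter_Ioc_of_left_le hx, max_self, Real.volume_Ioo,
      le_antisymm (cdf_le_one μ x) hx, sub_zero]

lemma integrableOn_quantile (hint : Integrable id μ) {a b : ℝ} (ha : 0 ≤ a) (hb : b ≤ 1) :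
    IntegrableOn (quantile μ) (Ioc a b) := by
  rw [← map_quantile_volume_Ioo (μ := μ)] at hint
  have h := (integrable_map_measure hint.aestronglyMeasurable aemeasurable_quantile).1 hint
  rw [IntegrableOn, Measure.restrict_congr_set Ioo_ae_eq_Ioc.symm]
  exact h.mono_measure (Measure.restrict_mono (Ioo_subset_Ioo ha hb) le_rfl)

lemma mtil_zero_one : mtil μ 0 1 = ∫ x, x ∂μ :=
  calc mtil μ 0 1 = ∫ u in Ioo 0 1, quantile μ u := integral_Ioc_eq_integral_Ioo
    _ = ∫ x, x ∂((volume.restrict (Ioo 0 1)).map (quantile μ)) :=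
      (integral_map aemeasurable_quantile aestronglyMeasurable_id).symm
    _ = ∫ x, x ∂μ := by rw [map_quantile_volume_Ioo]

lemma mtil_add (hint : Integrable id μ) {a b c : ℝ} (ha : 0 ≤ a) (hab : a ≤ b) (hbc : b ≤ c)
    (hc : c ≤ 1) : mtil μ a b + mtil μ b c = mtil μ a c := by
  rw [mtil, mtil, mtil, ← Ioc_union_Ioc_eq_Ioc hab hbc,
    setIntegral_union (Ioc_disjoint_Ioc_of_le le_rfl) measurableSet_Ioc
      (integrableOn_quantile hint ha (hbc.trans hc))
      (integrableOn_quantile hint (ha.trans hab) hc)]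

lemma aemeasurable_quantile_Ioc {a b : ℝ} (ha : 0 ≤ a) (hb : b ≤ 1) :
    AEMeasurable (quantile μ) (volume.restrict (Ioc a b)) := by
  rw [Measure.restrict_congr_set Ioo_ae_eq_Ioc.symm]
  exact aemeasurable_quantile.mono_measure
    (Measure.restrict_mono (Ioo_subset_Ioo ha hb) le_rfl)

lemma integral_id_qmeas {p q : ℝ} (hp : 0 ≤ p) (hq : q ≤ 1) :
    ∫ x, x ∂(qmeas μ p q) = mtil μ p q :=
  integral_map (aemeasurable_quantile_Ioc hp hq) aestronglyMeasurable_id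

lemma integrable_id_qmeas (hint : Integrable id μ) {p q : ℝ} (hp : 0 ≤ p) (hq : q ≤ 1) :
    Integrable id (qmeas μ p q) :=
  (integrable_map_measure aestronglyMeasurable_id (aemeasurable_quantile_Ioc hp hq)).2
    (integrableOn_quantile hint hp hq)

end Quantile

lemma integral_id_inv_smul_dirac_add {ν : Measure ℝ} (hν : Integrable id ν) {a c : ℝ}
    (ha : 0 ≤ a) (hc : 0 ≤ c) (x₀ : ℝ) :
    ∫ x, x ∂((ENNReal.ofReal c)⁻¹ • (ENNReal.ofReal a • Measure.dirac x₀ + ν)) =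
      (a * x₀ + ∫ x, x ∂ν) / c := by
  have hdirac : Integrable (fun x => x) (ENNReal.ofReal a • Measure.dirac x₀) :=
    (integrable_dirac (by simp)).smul_measure ENNReal.ofReal_ne_top
  rw [integral_smul_measure, integral_add_measure hdirac hν, integral_smul_measure,
    integral_dirac, ENNReal.toReal_inv, ENNReal.toReal_ofReal hc, ENNReal.toReal_ofReal ha,
    smul_eq_mul, smul_eq_mul, inv_mul_eq_div]

theorem stmt14_general (μ : Measure ℝ) [IsProbabilityMeasure μ]
    (hint : Integrable id μ) (hcent : ∫ x, x ∂μ = 0)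
    (lb ub : ℝ)
    (ξ π : ℝ) (hξ : ξ ∈ Ioo (distF μ lb) (distFm μ ub))
    (hπ : π ∈ Ico (distFm μ ub) 1)
    (heq1 : mtil μ ξ (distFm μ ub) + ub * (1 - distFm μ ub + ξ) = 0)
    (heq2 : mtil μ 0 ξ + mtil μ (distFm μ ub) π =
      lb * (ξ + π - distFm μ ub)) :
    (∫ x, x ∂((ENNReal.ofReal (1 - distFm μ ub + ξ))⁻¹ •
      (ENNReal.ofReal (π - distFm μ ub + ξ) • Measure.dirac lb +
        qmeas μ π 1))) = ub := by
  set F := distFm μ ub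
  obtain ⟨hξ0, hξF⟩ : 0 < ξ ∧ ξ < F := ⟨ENNReal.toReal_nonneg.trans_lt hξ.1, hξ.2⟩
  obtain ⟨hFπ, hπ1⟩ := hπ
  have hπ0 : 0 ≤ π := (hξ0.trans hξF).le.trans hFπ
  have hsum : mtil μ 0 ξ + mtil μ ξ F + mtil μ F π + mtil μ π 1 = 0 := by
    rw [mtil_add hint le_rfl hξ0.le hξF.le (by linarith),
      mtil_add hint le_rfl (hξ0.le.trans hξF.le) hFπ hπ1.le,
      mtil_add hint le_rfl hπ0 hπ1.le le_rfl, mtil_zero_one, hcent]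
  rw [integral_id_inv_smul_dirac_add (integrable_id_qmeas hint hπ0 le_rfl) (by linarith)
    (by linarith), integral_id_qmeas hπ0 le_rfl, div_eq_iff (by linarith)]
  linear_combination hsum - heq1 - heq2

theorem stmt14 (μ : Measure ℝ) [IsProbabilityMeasure μ]
    (hint : Integrable id μ) (hcent : ∫ x, x ∂μ = 0)
    (lb ub : ℝ) (hlb : lb < 0) (hub : 0 < ub)
    (ξ π : ℝ) (hξ : ξ ∈ Ioo (distF μ lb) (distFm μ ub))
    (hπ : π ∈ Ico (distFm μ ub) 1)
    (heq1 : mtil μ ξ (distFm μ ub) + ub * (1 - distFm μ ub + ξ) = 0)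
    (heq2 : mtil μ 0 ξ + mtil μ (distFm μ ub) π =
      lb * (ξ + π - distFm μ ub)) :
    (∫ x, x ∂((ENNReal.ofReal (1 - distFm μ ub + ξ))⁻¹ •
      (ENNReal.ofReal (π - distFm μ ub + ξ) • Measure.dirac lb +
        qmeas μ π 1))) = ub :=
  stmt14_general μ hint hcent lb ub ξ π hξ hπ heq1 heq2
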